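/- Let G be the simple graph on vertex set {0,1,…,11} whose edge set is {0,1},{0,3},{0,5},{0,7},{1,2},{1,8},{1,10},{2,3},{2,8},{2,11},{3,4},{3,7},{4,5},{4,6},{4,9},{4,10},{5,6},{5,9},{5,11},{6,7},{6,10},{6,11},{7,8},{8,9},{9,10},{9,11},{10,11}. Then the characteristic polynomial of the adjacency matrix of G equals a^12 − 27a^10 − 20a^9 + 207a^8 + 168a^7 − 610a^6 − 288a^5 + 723a^4 − 136a^3 − 171a^2 + 84a − 11. -/

import Mathlib

/-!
For a real symmetric matrix `A` with eigenvalues `λᵢ`, the characteristic polynomial is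
`∏ (X - λᵢ)` and `tr (A ^ k) = ∑ λᵢ ^ k`, so Newton's identities give
`k * c (n - k) = -∑_{j < k} c (n - j) * tr (A ^ (k - j))` for its coefficients `c`. In
characteristic zero this recursion determines the coefficients from the traces. For the adjacency
matrix of `H9` the traces (closed-walk counts) are computed by evaluation, and the claimed
polynomial satisfies the recursion with them.
-/

open Polynomial SimpleGraph

/-- Edge list (each unordered edge listed once) of the graph `H9`. -/
def edgesH9 : List (Fin 12 × Fin 12) :=
  [(0, 1), (0, 3), (0, 5), (0, 7), (1, 2), (1, 8), (1, 10), (2, 3), (2, 8), (2, 11), (3, 4), (3, 7), (4, 5), (4, 6), (4, 9), (4, 10), (5, 6), (5, 9), (5, 11), (6, 7), (6, 10), (6, 11), (7, 8), (8, 9), (9, 10), (9, 11), (10, 11)]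

/-- The simple graph on vertex set `Fin 12` with the given edge set. -/
def H9 : SimpleGraph (Fin 12) :=
  SimpleGraph.fromRel (fun i j => (i, j) ∈ edgesH9)

instance : DecidableRel H9.Adj := fun a b =>
  inferInstanceAs (Decidable (a ≠ b ∧ ((a, b) ∈ edgesH9 ∨ (b, a) ∈ edgesH9)))

open Finset

/-- `e j` plays the role of the coefficient of `X ^ (m - j)` in `∏ (X - μᵢ)`, and `p k` that of
the power sum `∑ μᵢ ^ k`. -/
def NewtonIdentities {R : Type*} [CommRing R] (p : ℕ → R) (m : ℕ) (e : ℕ → R) : Prop :=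
  ∀ k ≤ m, (k : R) * e k = -∑ j ∈ range k, e j * p (k - j)

namespace NewtonIdentities
variable {R : Type*} [CommRing R] {p : ℕ → R} {m : ℕ} {e e' : ℕ → R}

theorem unique [IsAddTorsionFree R] (he : NewtonIdentities p m e)
    (he' : NewtonIdentities p m e') (h0 : e 0 = e' 0) : ∀ k ≤ m, e k = e' k := by
  intro k
  induction k using Nat.strong_induction_on with
  | _ k ih =>
    intro hk
    rcases k with _ | k
    · exact h0
    refine nsmul_right_injective k.succ_ne_zero ?_
    simp only [nsmul_eq_mul, he _ hk, he' _ hk]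
    congr 1
    refine sum_congr rfl fun j hj => ?_
    rw [ih j (mem_range.1 hj) (by grind)]

theorem of_map {S : Type*} [CommRing S] {f : R →+* S} (hf : Function.Injective f)
    (h : NewtonIdentities (f ∘ p) m (f ∘ e)) : NewtonIdentities p m e := by
  intro k hk
  apply hf
  simpa using h k hk

end NewtonIdentities

theorem newtonIdentities_esymm {σ R : Type*} [Fintype σ] [CommRing R] (μ : σ → R) (m : ℕ) :
    NewtonIdentities (fun k => ∑ i, μ i ^ k) m
      (fun j => (-1) ^ j * (univ.val.map μ).esymm j) := by
  intro k _
  have h := congrArg (MvPolynomial.aeval μ) (MvPolynomial.mul_esymm_eq_sum σ R k)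
  simp only [map_mul, map_natCast, map_pow, map_neg, map_one, map_sum,
    MvPolynomial.aeval_esymm_eq_multiset_esymm, MvPolynomial.psum, MvPolynomial.aeval_X] at h
  rw [sum_filter, Nat.sum_antidiagonal_eq_sum_range_succ_mk, sum_range_succ,
    if_neg (lt_irrefl k), add_zero, sum_congr rfl fun j hj => if_pos (mem_range.1 hj)] at h
  dsimp only at h ⊢
  rw [mul_left_comm, h, ← mul_assoc, ← pow_add, show k + (k + 1) = 2 * k + 1 by ring, pow_succ,
    pow_mul, neg_one_sq, one_pow, one_mul, neg_one_mul]

namespace Matrix.IsHermitian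
variable {𝕜 n : Type*} [RCLike 𝕜] [Fintype n] [DecidableEq n] {A : Matrix n n 𝕜}

theorem trace_pow_eq_sum_eigenvalues_pow (hA : A.IsHermitian) (k : ℕ) :
    (A ^ k).trace = ∑ i, (hA.eigenvalues i : 𝕜) ^ k := by
  conv_lhs => rw [hA.spectral_theorem, ← map_pow, Unitary.conjStarAlgAut_apply, trace_mul_cycle,
    Unitary.coe_star_mul_self, one_mul, diagonal_pow, trace_diagonal]
  rfl

theorem charpoly_coeff_card_sub (hA : A.IsHermitian) {j : ℕ} (hj : j ≤ Fintype.card n) :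
    A.charpoly.coeff (Fintype.card n - j) =
      (-1) ^ j * (univ.val.map fun i => (hA.eigenvalues i : 𝕜)).esymm j := by
  have hcard : (univ.val.map fun i => (hA.eigenvalues i : 𝕜)).card = Fintype.card n := by simp
  have h := Multiset.prod_X_sub_C_coeff (univ.val.map fun i => (hA.eigenvalues i : 𝕜))
    (k := Fintype.card n - j) (by rw [hcard]; omega)
  rw [Multiset.map_map, hcard, Nat.sub_sub_self hj] at h
  rw [hA.charpoly_eq, prod_eq_multiset_prod]
  exact h

theorem newtonIdentities_charpoly (hA : A.IsHermitian) :
    NewtonIdentities (fun k => (A ^ k).trace) (Fintype.card n)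
      (fun j => A.charpoly.coeff (Fintype.card n - j)) := by
  intro k hk
  have h := newtonIdentities_esymm (fun i => (hA.eigenvalues i : 𝕜)) _ k hk
  simp only [← hA.trace_pow_eq_sum_eigenvalues_pow] at h
  dsimp only
  rw [hA.charpoly_coeff_card_sub hk, h]
  congr 1
  exact sum_congr rfl fun j hj => by
    rw [hA.charpoly_coeff_card_sub (by grind)]

end Matrix.IsHermitian

theorem Matrix.IsSymm.newtonIdentities_charpoly {n : Type*} [Fintype n] [DecidableEq n]
    {A : Matrix n n ℤ} (hA : A.IsSymm) :
    NewtonIdentities (fun k => (A ^ k).trace) (Fintype.card n)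
      (fun j => A.charpoly.coeff (Fintype.card n - j)) := by
  let f := Int.castRingHom ℝ
  have hB : (A.map f).IsHermitian := by
    rw [IsHermitian, conjTranspose_eq_transpose_of_trivial, ← transpose_map, hA.eq]
  refine NewtonIdentities.of_map (f := f) Int.cast_injective fun k hk => ?_
  have h := hB.newtonIdentities_charpoly k hk
  simp only [charpoly_map, coeff_map, ← Matrix.map_pow, ← AddMonoidHom.map_trace] at h
  simpa only [Function.comp_apply, eq_intCast] using h

theorem Polynomial.eq_sum_range_C_coeff_natDegree_sub_mul_X_pow {R : Type*} [Semiring R]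
    (p : R[X]) :
    p = ∑ j ∈ range (p.natDegree + 1), C (p.coeff (p.natDegree - j)) * X ^ (p.natDegree - j) := by
  conv_lhs => rw [p.as_sum_range_C_mul_X_pow, ← sum_range_reflect]
  simp

theorem newtonIdentities_H9 :
    NewtonIdentities (fun k => (H9.adjMatrix ℤ ^ k).trace) 12
      (fun j => [1, 0, -27, -20, 207, 168, -610, -288, 723, -136, -171, 84, -11].getD j 0) := by
  unfold NewtonIdentities
  decide +kernel

/-- The characteristic polynomial of the adjacency matrix of `H9`. -/
theorem charpoly_H9 :
    (H9.adjMatrix ℤ).charpoly =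
      X ^ 12 - 27 * X ^ 10 - 20 * X ^ 9 + 207 * X ^ 8 + 168 * X ^ 7 - 610 * X ^ 6 - 288 * X ^ 5 + 723 * X ^ 4 - 136 * X ^ 3 - 171 * X ^ 2 + 84 * X - 11 := by
  have hdeg : (H9.adjMatrix ℤ).charpoly.natDegree = 12 := by
    rw [Matrix.charpoly_natDegree_eq_dim, Fintype.card_fin]
  have hN := (isSymm_adjMatrix (α := ℤ) H9).newtonIdentities_charpoly
  rw [Fintype.card_fin] at hN
  have hcoeff := hN.unique newtonIdentities_H9 (by
    simpa [hdeg] using (Matrix.charpoly_monic (H9.adjMatrix ℤ)).coeff_natDegree)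
  rw [(H9.adjMatrix ℤ).charpoly.eq_sum_range_C_coeff_natDegree_sub_mul_X_pow, hdeg,
    sum_congr rfl fun j hj => by rw [hcoeff j (by grind)]]
  simp only [sum_range_succ, range_zero, sum_empty, List.getD_cons_succ, List.getD_cons_zero,
    eq_intCast]
  push_cast
  ring
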